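/- arXiv:1801.04387 — 4 statements merged into one kernel-verified Lean document; each statement's English description precedes it below -/
import Mathlib

section
/- Let C be a type of constants with at least two distinct elements, and let v₁ v₂ : Option C be values. Then every pair of instantiations of v₁ and v₂ agree (i.e., for all constants c₁, c₂, if c₁ is an instantiation of v₁ and c₂ is an instantiation of v₂ then c₁ = c₂) if and only if there exists a constant c with v₁ = some c and v₂ = some c. (This characterizes the sure (□) evaluation of the equality filter on possibly-null values.) -/
/-- An instantiation of a possibly-null value `v : Option C` is a constant `c`
such that `v = some c` or `v = none`. -/
def Inst {C : Type*} (v : Option C) (c : C) : Prop := v = some c ∨ v = none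

/-- Sure (□) evaluation of the equality filter on possibly-null values:
if `C` has at least two distinct constants, then all instantiations of `v₁` and `v₂`
agree iff both values are the same non-null constant. -/
theorem sure_equality_filter {C : Type*} (hC : ∃ a b : C, a ≠ b) (v₁ v₂ : Option C) :
    (∀ c₁ c₂ : C, Inst v₁ c₁ → Inst v₂ c₂ → c₁ = c₂) ↔
      ∃ c : C, v₁ = some c ∧ v₂ = some c := by
  obtain ⟨a, b, hab⟩ := hC
  constructor
  · intro h
    match v₁, v₂ with
    | some c₁, some c₂ =>
      have := h c₁ c₂ (Or.inl rfl) (Or.inl rfl)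
      exact ⟨c₁, rfl, by rw [this]⟩
    | none, v₂ =>
      exfalso
      rcases v₂ with _ | c
      · exact hab (h a b (Or.inr rfl) (Or.inr rfl))
      · exact hab ((h a c (Or.inr rfl) (Or.inl rfl)).trans
          (h b c (Or.inr rfl) (Or.inl rfl)).symm)
    | some c₁, none =>
      exact absurd (h c₁ a (Or.inl rfl) (Or.inr rfl) ▸ h c₁ b (Or.inl rfl) (Or.inr rfl)) hab
  · rintro ⟨c, rfl, rfl⟩ c₁ c₂ h₁ h₂
    rcases h₁ with h₁ | h₁ <;> rcases h₂ with h₂ | h₂ <;> simp_all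
end

section
/- Let C be a nonempty type of constants, R and S sets of attributes, μ : R → Option C a tuple over R, and ν : S → Option C a tuple over S. Then μ and ν are compatible (for every X ∈ R ∩ S, μ X = ν X, or μ X = none, or ν X = none) if and only if there exists a total assignment w : (R ∪ S) → C whose restriction to R is a possible world of μ and whose restriction to S is a possible world of ν. -/
/-- `w` is a possible world of the tuple `μ` over schema `R`:
at every attribute, `w` instantiates `μ`. -/
def PossibleWorld {A C : Type*} {R : Set A} (μ : R → Option C) (w : R → C) : Prop :=
  ∀ x : R, Inst (μ x) (w x)

/-- Tuples `μ` over `R` and `ν` over `S` are compatible: on every shared attribute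
they are equal, or one of them is null. -/
def Compatible {A C : Type*} {R S : Set A} (μ : R → Option C) (ν : S → Option C) : Prop :=
  ∀ (x : A) (hR : x ∈ R) (hS : x ∈ S),
    μ ⟨x, hR⟩ = ν ⟨x, hS⟩ ∨ μ ⟨x, hR⟩ = none ∨ ν ⟨x, hS⟩ = none

/-- Two tuples are compatible iff they have a common total instantiation over `R ∪ S`. -/
theorem compatible_iff_common_world {A C : Type*} [Nonempty C] {R S : Set A}
    (μ : R → Option C) (ν : S → Option C) :
    Compatible μ ν ↔
      ∃ w : ↥(R ∪ S) → C,
        PossibleWorld μ (fun x => w ⟨x, Set.mem_union_left S x.2⟩) ∧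
        PossibleWorld ν (fun x => w ⟨x, Set.mem_union_right R x.2⟩) := by
  classical
  inhabit C
  constructor
  · intro hc
    refine ⟨fun x =>
      if hR : (x : A) ∈ R then
        match μ ⟨x, hR⟩ with
        | some c => c
        | none =>
          if hS : (x : A) ∈ S then (ν ⟨x, hS⟩).getD default else default
      else (ν ⟨x, x.2.resolve_left hR⟩).getD default, ?_, ?_⟩
    · intro ⟨x, hR⟩
      simp only [hR, dif_pos]
      cases h : μ ⟨x, hR⟩ with
      | some c => simp [Inst, h]
      | none => right; rfl
    · intro ⟨x, hS⟩
      by_cases hR : x ∈ R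
      · simp only [hR, dif_pos]
        cases h : μ ⟨x, hR⟩ with
        | some c =>
          rcases hc x hR hS with h' | h' | h'
          · left; rw [← h', h]
          · rw [h'] at h; exact absurd h (by simp)
          · right; exact h'
        | none =>
          simp only [hS, dif_pos]
          cases h' : ν ⟨x, hS⟩ with
          | some c => left; simp [h']
          | none => right; rfl
      · simp only [hR, dif_neg, not_false_iff]
        cases h' : ν ⟨x, hS⟩ with
        | some c => left; simp [h']
        | none => right; rfl
  · rintro ⟨w, hw1, hw2⟩ x hR hS
    rcases hw1 ⟨x, hR⟩ with h1 | h1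
    · rcases hw2 ⟨x, hS⟩ with h2 | h2
      · left; rw [h1, h2]
      · right; right; exact h2
    · right; left; exact h1
end

section
/- Let C be a type of constants, and let r be a null-free relation over schema R and s a null-free relation over schema S. Then the modal join r ⋈◇ s is null-free and coincides with the classical natural join: a tuple κ over R ∪ S belongs to r ⋈◇ s if and only if κ is null-free, its restriction to R belongs to r, and its restriction to S belongs to s. -/
open scoped Classical

/-- The concatenation `μ⌢ν` over `R ∪ S`: on each attribute it takes the most
informative of the two available values (`some c` if either value is `some c`,
and `none` if both are `none`). -/
noncomputable def concat {A C : Type*} {R S : Set A}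
    (μ : R → Option C) (ν : S → Option C) : ↥(R ∪ S) → Option C :=
  fun x =>
    if hR : (x : A) ∈ R then
      if hS : (x : A) ∈ S then (μ ⟨x, hR⟩ <|> ν ⟨x, hS⟩) else μ ⟨x, hR⟩
    else ν ⟨x, x.2.resolve_left hR⟩


/-- A relation over schema `R` is null-free if no tuple in it is null on any attribute. -/
def NullFree {A C : Type*} {R : Set A} (r : Set (↥R → Option C)) : Prop :=
  ∀ μ ∈ r, ∀ x : ↥R, μ x ≠ none

/-- The modal join `r ⋈◇ s`: concatenations of compatible pairs of tuples. -/
def modalJoin {A C : Type*} {R S : Set A}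
    (r : Set (↥R → Option C)) (s : Set (↥S → Option C)) :
    Set (↥(R ∪ S) → Option C) :=
  {κ | ∃ μ ∈ r, ∃ ν ∈ s, Compatible μ ν ∧ κ = concat μ ν}

/-- On null-free relations, the modal join is null-free and coincides with the classical
natural join: `κ ∈ r ⋈◇ s` iff `κ` is null-free, its restriction to `R` is in `r`,
and its restriction to `S` is in `s`. -/
theorem modalJoin_nullFree_eq_naturalJoin {A C : Type*} {R S : Set A}
    (r : Set (↥R → Option C)) (s : Set (↥S → Option C))
    (hr : NullFree r) (hs : NullFree s) :
    NullFree (modalJoin r s) ∧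
    ∀ κ : ↥(R ∪ S) → Option C,
      κ ∈ modalJoin r s ↔
        (∀ x : ↥(R ∪ S), κ x ≠ none) ∧
        (fun x : ↥R => κ ⟨x, Set.mem_union_left S x.2⟩) ∈ r ∧
        (fun x : ↥S => κ ⟨x, Set.mem_union_right R x.2⟩) ∈ s := by
  have key : ∀ μ ∈ r, ∀ ν ∈ s, Compatible μ ν →
      ((fun x : ↥R => concat μ ν ⟨x, Set.mem_union_left S x.2⟩) = μ ∧
       (fun x : ↥S => concat μ ν ⟨x, Set.mem_union_right R x.2⟩) = ν) := by
    intro μ hμ ν hν hc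
    constructor
    · funext x
      simp only [concat, x.2, dif_pos]
      split
      · rcases hc x x.2 ‹(x : A) ∈ S› with h | h | h
        · cases hμx : μ x with
          | none => exact absurd hμx (hr μ hμ x)
          | some c => simp [hμx]
        · exact absurd h (hr μ hμ x)
        · show (μ x <|> ν ⟨x, ‹(x : A) ∈ S›⟩) = μ x
          cases hμx : μ x with
          | none => exact absurd hμx (hr μ hμ x)
          | some c => simp [h]
      · rfl
    · funext x
      simp only [concat]
      split
      · rcases hc x ‹(x : A) ∈ R› x.2 with h | h | h
        · simp only [x.2, dif_pos]
          cases hμx : μ ⟨x, ‹(x : A) ∈ R›⟩ with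
          | none => exact absurd hμx (hr μ hμ _)
          | some c => rw [hμx] at h; simp [← h, Subtype.coe_eta]
        · exact absurd h (hr μ hμ _)
        · exact absurd h (hs ν hν _)
      · simp [Subtype.coe_eta]
  have nf : NullFree (modalJoin r s) := by
    intro κ hκ x
    obtain ⟨μ, hμ, ν, hν, hc, rfl⟩ := hκ
    obtain ⟨h1, h2⟩ := key μ hμ ν hν hc
    rcases x.2 with hR | hS
    · have := congrFun h1 ⟨x, hR⟩
      simp only at this
      rw [Subtype.coe_eta] at this
      rw [this]; exact hr μ hμ _
    · have := congrFun h2 ⟨x, hS⟩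
      simp only at this
      rw [Subtype.coe_eta] at this
      rw [this]; exact hs ν hν _
  refine ⟨nf, fun κ => ⟨fun hκ => ?_, fun ⟨hnn, hR, hS⟩ => ?_⟩⟩
  · refine ⟨fun x => nf κ hκ x, ?_, ?_⟩ <;>
    · obtain ⟨μ, hμ, ν, hν, hc, rfl⟩ := hκ
      obtain ⟨h1, h2⟩ := key μ hμ ν hν hc
      first | (rw [h1]; exact hμ) | (rw [h2]; exact hν)
  · refine ⟨_, hR, _, hS, ?_, ?_⟩
    · intro x hxR hxS
      left; rfl
    · funext x
      simp only [concat]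
      split
      · split
        · cases hκx : κ ⟨x, Set.mem_union_left S ‹(x : A) ∈ R›⟩ with
          | none => exact absurd hκx (hnn _)
          | some c =>
            have : (⟨x, Set.mem_union_left S ‹(x : A) ∈ R›⟩ : ↥(R ∪ S)) = x :=
              Subtype.coe_eta x _
            rw [this] at hκx
            simp [hκx]
        · exact (congrArg κ (Subtype.coe_eta x _)).symm ▸ rfl
      · exact (congrArg κ (Subtype.coe_eta x _)).symm ▸ rfl
end

section
/- Let C be a nonempty type of constants, r a relation over schema R and s a relation over schema S. Then the modal difference computes sure non-membership: a tuple μ belongs to r −□ s if and only if μ ∈ r and for every ν ∈ s there is no total assignment w : (R ∪ S) → C whose restriction to R is a possible world of μ and whose restriction to S is a possible world of ν. -/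
/-- The modal difference `r −□ s`: tuples of `r` compatible with no tuple of `s`. -/
def modalDiff {A C : Type*} {R S : Set A}
    (r : Set (↥R → Option C)) (s : Set (↥S → Option C)) : Set (↥R → Option C) :=
  {μ | μ ∈ r ∧ ∀ ν ∈ s, ¬ Compatible μ ν}

/-- The modal difference computes sure non-membership: `μ ∈ r −□ s` iff `μ ∈ r` and
for every `ν ∈ s` there is no total assignment over `R ∪ S` restricting to possible
worlds of both `μ` and `ν`. -/
theorem modalDiff_eq_sure_nonmembership {A C : Type*} [Nonempty C] {R S : Set A}
    (r : Set (↥R → Option C)) (s : Set (↥S → Option C)) (μ : ↥R → Option C) :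
    μ ∈ modalDiff r s ↔
      μ ∈ r ∧ ∀ ν ∈ s, ¬ ∃ w : ↥(R ∪ S) → C,
        PossibleWorld μ (fun x => w ⟨x, Set.mem_union_left S x.2⟩) ∧
        PossibleWorld ν (fun x => w ⟨x, Set.mem_union_right R x.2⟩) := by
  have key : ∀ ν : ↥S → Option C,
      Compatible μ ν ↔ ∃ w : ↥(R ∪ S) → C,
        PossibleWorld μ (fun x => w ⟨x, Set.mem_union_left S x.2⟩) ∧
        PossibleWorld ν (fun x => w ⟨x, Set.mem_union_right R x.2⟩) := by
    intro ν
    constructor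
    · intro hc
      classical
      refine ⟨fun x => ((if hR : (x : A) ∈ R then μ ⟨x, hR⟩ else none).getD
          ((if hS : (x : A) ∈ S then ν ⟨x, hS⟩ else none).getD (Classical.arbitrary C))), ?_, ?_⟩
      · intro x
        simp only [x.2, dif_pos]
        cases h : μ x with
        | none => exact Or.inr rfl
        | some c =>
          left
          have : μ ⟨(x : A), x.2⟩ = some c := by
            rw [show (⟨(x : A), x.2⟩ : ↥R) = x from rfl, h]
          simp [this]
      · intro x
        by_cases hR : (x : A) ∈ R
        · simp only [hR, dif_pos, x.2]
          rcases hc x hR x.2 with h | h | h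
          · have : ν ⟨(x : A), x.2⟩ = ν x := rfl
            rw [this] at h
            cases hν : ν x with
            | none => exact Or.inr rfl
            | some c => left; rw [h, hν]; simp [hν]
          · rw [h]
            cases hν : ν x with
            | none => exact Or.inr rfl
            | some c =>
              left
              have : ν ⟨(x : A), x.2⟩ = some c := hν
              simp [this]
          · exact Or.inr h
        · simp only [hR, dif_neg, not_false_iff, x.2, dif_pos]
          cases hν : ν x with
          | none => exact Or.inr rfl
          | some c =>
            left
            have : ν ⟨(x : A), x.2⟩ = some c := hν
            simp [this]
    · rintro ⟨w, hμ, hν⟩ x hR hS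
      have h1 := hμ ⟨x, hR⟩
      have h2 := hν ⟨x, hS⟩
      have hsame : (⟨x, Set.mem_union_left S hR⟩ : ↥(R ∪ S)) =
          ⟨x, Set.mem_union_right R hS⟩ := rfl
      simp only [Inst] at h1 h2
      rcases h1 with h1 | h1
      · rcases h2 with h2 | h2
        · left; rw [h1, h2, hsame]
        · exact Or.inr (Or.inr h2)
      · exact Or.inr (Or.inl h1)
  simp only [modalDiff, Set.mem_setOf_eq]
  constructor
  · rintro ⟨hr, h⟩
    exact ⟨hr, fun ν hν => by rw [← key]; exact h ν hν⟩
  · rintro ⟨hr, h⟩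
    exact ⟨hr, fun ν hν => by rw [key]; exact h ν hν⟩
end
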